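/- Fix an integer n ≥ 3 and h₀ ∈ (0,1/2). Suppose that for each h ∈ (0,h₀) the pair (δ(h),γ(h)) solves the system at (n,h), and that δ(h) → 0 and γ(h) → π/2 as h → 0⁺. Then δ(h)·( 8(n−1)/(n(n−2)) + h + |log h| ) → π as h → 0⁺; that is, δ(h) = π/( 8(n−1)/(n(n−2)) + h + |log h| ) + o(1/|log h|). -/

import Mathlib

open MeasureTheory Real Set Filter

noncomputable section

/-- `f_m(h) = (1/m)·Σ_{k=0}^{m−1} (1−h)^{2−n+k}` (for the fixed dimension `n`). -/
def fm (n m : ℕ) (h : ℝ) : ℝ :=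
  (1 / (m : ℝ)) * ∑ k ∈ Finset.range m, (1 - h) ^ ((2 : ℤ) - (n : ℤ) + (k : ℤ))

/-- `g_n(h) = f_n(h) − 2 f_{n−1}(h) + f_{n−2}(h)`. -/
def gn (n : ℕ) (h : ℝ) : ℝ := fm n n h - 2 * fm n (n - 1) h + fm n (n - 2) h

/-- `(δ,γ)` solves the system at `(n,h)`. -/
def SolvesSystem (n : ℕ) (h δ γ : ℝ) : Prop :=
  0 < δ ∧ 4 * δ ^ 2 ≤ (n : ℝ) * ((n : ℝ) - 2) ∧
  (∀ r ∈ Set.Icc h (1 - h), γ + δ * Real.log r ∈ Set.Ioo (-(π/2)) (π/2)) ∧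
  (((n : ℝ) ^ 2 - 2 * (n : ℝ)) / 2 - 2 * δ ^ 2)
      * ((n : ℝ) ^ 2 / 4 - δ ^ 2 + (n : ℝ) * δ * Real.tan (γ + δ * Real.log h))
    = (((n : ℝ) - 2) / ((n : ℝ) - 1)) * ((n : ℝ) ^ 2 / 4 + δ ^ 2) ^ 2 ∧
  ((n : ℝ) - 2) / 2 + δ * Real.tan (γ + δ * Real.log (1 - h))
    = (1 / h) * (fm n n h - gn n h * (((n : ℝ) - 2) ^ 2 / 4 + δ ^ 2))


/-! The first equation of the system expresses `δ·tan θ`, with `θ = γ + δ·log h`, as a function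
of `δ` alone whose value at `δ = 0` is `-n(n-2)/(8(n-1)) < 0`. As `δ → 0⁺` this forces
`tan θ → -∞`, i.e. `θ → -π/2`, while `γ → π/2`. Hence `δ·|log h| = γ - θ → π`, and the remaining
terms `δ·(8(n-1)/(n(n-2)) + h)` tend to `0`. -/

open Topology

/-- The value of `δ·tan(γ + δ·log h)` forced by the first equation of the system. -/
def mulTanAtLeft (n : ℕ) (d : ℝ) : ℝ :=
  ((((n : ℝ) - 2) / ((n : ℝ) - 1) * ((n : ℝ) ^ 2 / 4 + d ^ 2) ^ 2
      / (((n : ℝ) ^ 2 - 2 * (n : ℝ)) / 2 - 2 * d ^ 2)) - (n : ℝ) ^ 2 / 4 + d ^ 2) / n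

theorem tendsto_mulTanAtLeft {n : ℕ} (hn : 3 ≤ n) :
    Tendsto (mulTanAtLeft n) (𝓝 0)
      (𝓝 (-((n : ℝ) * ((n : ℝ) - 2) / (8 * ((n : ℝ) - 1))))) := by
  have hn3 : (3 : ℝ) ≤ n := by exact_mod_cast hn
  have hden : ((n : ℝ) ^ 2 - 2 * (n : ℝ)) / 2 - 2 * (0 : ℝ) ^ 2 ≠ 0 := by nlinarith
  have hcont : ContinuousAt (mulTanAtLeft n) 0 := by
    unfold mulTanAtLeft
    fun_prop (disch := exact hden)
  convert hcont.tendsto using 2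
  have : (n : ℝ) - 1 ≠ 0 := by linarith
  have : (n : ℝ) - 2 ≠ 0 := by linarith
  have : (n : ℝ) ≠ 0 := by linarith
  simp only [mulTanAtLeft]
  field_simp
  ring

/-- The denominator of `mulTanAtLeft` cannot vanish: `n(n-2) ≥ 4δ² > 0` forces `n ≥ 3`, so the
right-hand side of the first equation is positive. -/
theorem SolvesSystem.mul_tan_eq {n : ℕ} {h δ γ : ℝ} (hs : SolvesSystem n h δ γ) :
    δ * Real.tan (γ + δ * Real.log h) = mulTanAtLeft n δ := by
  obtain ⟨hδ, hδn, -, hfirst, -⟩ := hs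
  have hn2 : 2 < (n : ℝ) := by
    by_contra! hle
    nlinarith [Nat.cast_nonneg (α := ℝ) n]
  have hrhs : 0 < ((n : ℝ) - 2) / ((n : ℝ) - 1) * ((n : ℝ) ^ 2 / 4 + δ ^ 2) ^ 2 := by
    have : 0 < (n : ℝ) - 1 := by linarith
    positivity
  have hden : ((n : ℝ) ^ 2 - 2 * (n : ℝ)) / 2 - 2 * δ ^ 2 ≠ 0 := by
    rintro hzero
    rw [hzero, zero_mul] at hfirst
    linarith
  have hn0 : (n : ℝ) ≠ 0 := by linarith
  rw [mulTanAtLeft, eq_div_iff hn0, ← hfirst, mul_div_cancel_left₀ _ hden]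
  ring

theorem tendsto_atBot_of_mul_tendsto_neg {α : Type*} {l : Filter α} {f g : α → ℝ} {L : ℝ}
    (hL : L < 0) (hf : Tendsto f l (𝓝[>] 0)) (hfg : Tendsto (fun x => f x * g x) l (𝓝 L)) :
    Tendsto g l atBot := by
  have hpos : ∀ᶠ x in l, 0 < f x := hf self_mem_nhdsWithin
  refine (hfg.neg_mul_atTop hL (tendsto_inv_nhdsGT_zero.comp hf)).congr' ?_
  filter_upwards [hpos] with x hx
  simp only [Function.comp_apply]
  field_simp

theorem tendsto_neg_pi_div_two_of_tendsto_tan_atBot {α : Type*} {l : Filter α} {θ : α → ℝ}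
    (hθ : ∀ᶠ x in l, θ x ∈ Ioo (-(π / 2)) (π / 2)) (htan : Tendsto (fun x => tan (θ x)) l atBot) :
    Tendsto θ l (𝓝 (-(π / 2))) := by
  refine ((tendsto_arctan_atBot.mono_right nhdsWithin_le_nhds).comp htan).congr' ?_
  filter_upwards [hθ] with x hx
  exact arctan_tan hx.1 hx.2

/-- Asymptotics of `δ(h)` for solutions `(δ(h),γ(h))` of the system at `(n,h)`:
if `δ(h) → 0` and `γ(h) → π/2` as `h → 0⁺`, then
`δ(h)·(8(n−1)/(n(n−2)) + h + |log h|) → π`. -/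
theorem delta_h_nd_asymptotics (n : ℕ) (hn : 3 ≤ n) (h₀ : ℝ)
    (hh₀ : h₀ ∈ Set.Ioo (0:ℝ) (1/2)) (δ γ : ℝ → ℝ)
    (hsol : ∀ h ∈ Set.Ioo (0:ℝ) h₀, SolvesSystem n h (δ h) (γ h))
    (hδ : Filter.Tendsto δ (nhdsWithin 0 (Set.Ioo 0 h₀)) (nhds 0))
    (hγ : Filter.Tendsto γ (nhdsWithin 0 (Set.Ioo 0 h₀)) (nhds (π/2))) :
    Filter.Tendsto
      (fun h => δ h * (8 * ((n : ℝ) - 1) / ((n : ℝ) * ((n : ℝ) - 2)) + h + |Real.log h|))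
      (nhdsWithin 0 (Set.Ioo 0 h₀)) (nhds π) := by
  set l := 𝓝[Ioo 0 h₀] (0 : ℝ)
  have hsol' : ∀ᶠ h in l, SolvesSystem n h (δ h) (γ h) :=
    eventually_nhdsWithin_of_forall hsol
  have hδ' : Tendsto δ l (𝓝[>] 0) :=
    tendsto_nhdsWithin_iff.2 ⟨hδ, hsol'.mono fun _ hs => hs.1⟩
  have hmulTan : Tendsto (fun h => δ h * tan (γ h + δ h * log h)) l
      (𝓝 (-((n : ℝ) * ((n : ℝ) - 2) / (8 * ((n : ℝ) - 1))))) :=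
    ((tendsto_mulTanAtLeft hn).comp hδ).congr' (hsol'.mono fun _ hs => hs.mul_tan_eq.symm)
  have hc : 0 < (n : ℝ) * ((n : ℝ) - 2) / (8 * ((n : ℝ) - 1)) := by
    have hn3 : (3 : ℝ) ≤ n := by exact_mod_cast hn
    apply div_pos <;> nlinarith
  have hsmall : ∀ᶠ h in l, h ∈ Ioo 0 h₀ := self_mem_nhdsWithin
  have hθ : Tendsto (fun h => γ h + δ h * log h) l (𝓝 (-(π / 2))) := by
    refine tendsto_neg_pi_div_two_of_tendsto_tan_atBot ?_
      (tendsto_atBot_of_mul_tendsto_neg (neg_neg_of_pos hc) hδ' hmulTan)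
    filter_upwards [hsol', hsmall] with h hs hh
    exact hs.2.2.1 h ⟨le_rfl, by linarith [hh.2, hh₀.2]⟩
  have hid : Tendsto (fun h : ℝ => h) l (𝓝 0) := tendsto_id.mono_right nhdsWithin_le_nhds
  have hlim := ((hδ.mul_const (8 * ((n : ℝ) - 1) / ((n : ℝ) * ((n : ℝ) - 2)))).add
    (hδ.mul hid)).add (hγ.sub hθ)
  rw [zero_mul, mul_zero, zero_add, zero_add, sub_neg_eq_add, add_halves] at hlim
  refine hlim.congr' ?_
  filter_upwards [hsmall] with h hh
  rw [abs_of_neg (log_neg hh.1 (by linarith [hh.2, hh₀.2]))]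
  ring
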